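/- For every h with 0 < h ≤ 1/2, ∫_{|z| ≥ 1} |f₁(z − h) − f₁(z)| dz ≥ h · ∫_{|z| ≥ 1} (2π·|e^{3πz/2} − e^{−3πz/2}|) / (e^{3πz/2} + e^{−3πz/2})² dz, where f₁(z) = 1/cosh(πz). -/

import Mathlib

noncomputable section

open Real MeasureTheory

/-- The density of the Lévy stochastic area at time 1: `f₁(z) = 1 / cosh(πz)`. -/
def levyDensity (z : ℝ) : ℝ := 1 / Real.cosh (π * z)

private lemma one_le_sinh_half_pi {a : ℝ} (ha : 1 / 2 ≤ a) : 1 ≤ Real.sinh (π * a) := by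
  have h1 : (1 : ℝ) ≤ π * a := by nlinarith [Real.pi_gt_three]
  have h2 : Real.sinh 1 ≤ Real.sinh (π * a) := Real.sinh_le_sinh.mpr h1
  have h3 : (1 : ℝ) ≤ Real.sinh 1 := by
    rw [Real.sinh_eq]
    have he : Real.exp 1 * Real.exp (-1) = 1 := by
      rw [← Real.exp_add]; norm_num
    nlinarith [Real.exp_one_gt_d9, Real.exp_pos (-1)]
  linarith

private lemma sinh_div_cosh_sq_anti {a b : ℝ} (ha : 1 / 2 ≤ a) (hab : a ≤ b) :
    Real.sinh (π * b) / Real.cosh (π * b) ^ 2 ≤ Real.sinh (π * a) / Real.cosh (π * a) ^ 2 := by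
  have hca : 0 < Real.cosh (π * a) := Real.cosh_pos _
  have hcb : 0 < Real.cosh (π * b) := Real.cosh_pos _
  rw [div_le_div_iff₀ (by positivity) (by positivity)]
  have hsa : 1 ≤ Real.sinh (π * a) := one_le_sinh_half_pi ha
  have hsb : Real.sinh (π * a) ≤ Real.sinh (π * b) := by
    apply Real.sinh_le_sinh.mpr; nlinarith [Real.pi_gt_three]
  have h1 := Real.cosh_sq (π * a)
  have h2 := Real.cosh_sq (π * b)
  nlinarith [mul_nonneg (sub_nonneg.mpr hsb) (by nlinarith : (0:ℝ) ≤ Real.sinh (π*a) * Real.sinh (π*b) - 1)]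

private lemma levy_hasDerivAt (x : ℝ) :
    HasDerivAt levyDensity (-(Real.sinh (π * x) * π) / Real.cosh (π * x) ^ 2) x := by
  have h1 : HasDerivAt (fun z : ℝ => Real.cosh (π * z)) (Real.sinh (π * x) * π) x := by
    have hl : HasDerivAt (fun z : ℝ => π * z) π x :=
      ((hasDerivAt_id' x).const_mul π).congr_deriv (mul_one π)
    exact (Real.hasDerivAt_cosh (π * x)).comp x hl
  have h2 := h1.inv (Real.cosh_pos (π * x)).ne'
  have h3 : levyDensity = fun z : ℝ => (Real.cosh (π * z))⁻¹ := funext fun z => one_div _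
  rw [h3]
  exact h2

private lemma levy_integrable : Integrable levyDensity := by
  have hIoi : IntegrableOn (fun x : ℝ => 2 * Real.exp (-(π * |x|))) (Set.Ioi 0) := by
    apply MeasureTheory.IntegrableOn.congr_fun
      ((exp_neg_integrableOn_Ioi 0 Real.pi_pos).const_mul 2) ?_ measurableSet_Ioi
    intro x hx
    simp [abs_of_pos (Set.mem_Ioi.mp hx), neg_mul]
  have hInt : Integrable (fun x : ℝ => 2 * Real.exp (-(π * |x|))) := by
    rw [← integrableOn_univ, ← @Set.Iio_union_Ici _ _ (0 : ℝ), integrableOn_union,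
      integrableOn_Ici_iff_integrableOn_Ioi]
    refine ⟨?_, hIoi⟩
    rw [← (Measure.measurePreserving_neg (volume : Measure ℝ)).integrableOn_comp_preimage
        (Homeomorph.neg ℝ).measurableEmbedding]
    simp only [Function.comp_def, abs_neg, Set.neg_preimage, Set.neg_Iio, neg_zero]
    exact hIoi
  apply hInt.mono'
  · apply Continuous.aestronglyMeasurable
    exact continuous_const.div (Real.continuous_cosh.comp (continuous_const.mul continuous_id))
      fun x => (Real.cosh_pos _).ne'
  · refine Filter.Eventually.of_forall fun z => ?_
    have hc : Real.cosh (π * z) = (Real.exp (π * |z|) + Real.exp (-(π * |z|))) / 2 := by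
      rw [← Real.cosh_abs (π * z), abs_mul, abs_of_pos Real.pi_pos, Real.cosh_eq]
    have he : Real.exp (-(π * |z|)) * Real.exp (π * |z|) = 1 := by
      rw [← Real.exp_add]; norm_num
    have hpos : 0 < Real.cosh (π * z) := Real.cosh_pos _
    rw [Real.norm_eq_abs, levyDensity, abs_of_pos (by positivity)]
    rw [div_le_iff₀ hpos, hc]
    nlinarith [Real.exp_pos (-(π * |z|)), sq_nonneg (Real.exp (-(π * |z|)))]

private lemma key_pointwise (h : ℝ) (h0 : 0 < h) (h12 : h ≤ 1 / 2) {z : ℝ} (hz : 1 ≤ |z|) :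
    h * (2 * π * |Real.exp (3 * π * z / 2) - Real.exp (-(3 * π * z / 2))| /
      (Real.exp (3 * π * z / 2) + Real.exp (-(3 * π * z / 2))) ^ 2) ≤
      |levyDensity (z - h) - levyDensity z| := by
  -- rewrite RHS integrand as π * sinh(π * (3|z|/2)) / cosh(π * (3|z|/2))^2
  have harg : 3 * π * z / 2 = π * (3 * z / 2) := by ring
  have hrhs : 2 * π * |Real.exp (3 * π * z / 2) - Real.exp (-(3 * π * z / 2))| /
      (Real.exp (3 * π * z / 2) + Real.exp (-(3 * π * z / 2))) ^ 2 =
      π * (Real.sinh (π * (3 * |z| / 2)) / Real.cosh (π * (3 * |z| / 2)) ^ 2) := by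
    have hs : Real.exp (3 * π * z / 2) - Real.exp (-(3 * π * z / 2)) =
        2 * Real.sinh (π * (3 * z / 2)) := by
      rw [Real.sinh_eq, harg]; ring
    have hco : Real.exp (3 * π * z / 2) + Real.exp (-(3 * π * z / 2)) =
        2 * Real.cosh (π * (3 * z / 2)) := by
      rw [Real.cosh_eq, harg]; ring
    have habs : π * (3 * |z| / 2) = |π * (3 * z / 2)| := by
      rw [abs_mul, abs_of_pos Real.pi_pos, abs_div, abs_mul]
      norm_num
    rw [hs, hco, habs, ← Real.abs_sinh, Real.cosh_abs]
    have hcp : 0 < Real.cosh (π * (3 * z / 2)) := Real.cosh_pos _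
    rw [abs_mul]
    rw [abs_of_pos (by norm_num : (0:ℝ) < 2)]
    field_simp
  rw [hrhs]
  -- MVT
  obtain ⟨c, hc, hceq⟩ := exists_hasDerivAt_eq_slope levyDensity
    (fun x => -(Real.sinh (π * x) * π) / Real.cosh (π * x) ^ 2)
    (by linarith : z - h < z)
    (fun x _ => (levy_hasDerivAt x).continuousAt.continuousWithinAt)
    (fun x _ => levy_hasDerivAt x)
  have hdz : z - (z - h) = h := by ring
  have hval : levyDensity z - levyDensity (z - h) =
      (-(Real.sinh (π * c) * π) / Real.cosh (π * c) ^ 2) * h := by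
    rw [hceq, hdz]; field_simp
  have habsval : |levyDensity (z - h) - levyDensity z| =
      h * (π * (Real.sinh (π * |c|) / Real.cosh (π * |c|) ^ 2)) := by
    rw [abs_sub_comm, hval, abs_mul, abs_of_pos h0]
    have h1 : |(-(Real.sinh (π * c) * π) / Real.cosh (π * c) ^ 2)| =
        π * (Real.sinh (π * |c|) / Real.cosh (π * |c|) ^ 2) := by
      rw [abs_div, abs_neg, abs_mul, abs_of_pos Real.pi_pos, abs_pow,
        abs_of_pos (Real.cosh_pos (π * c))]
      have : π * |c| = |π * c| := by rw [abs_mul, abs_of_pos Real.pi_pos]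
      rw [this, ← Real.abs_sinh, Real.cosh_abs]
      ring
    rw [h1]; ring
  rw [habsval]
  -- now reduce to monotonicity: 1/2 ≤ |c| and |c| ≤ 3|z|/2
  have hc1 : 1 / 2 ≤ |c| ∧ |c| ≤ 3 * |z| / 2 := by
    rcases le_abs.mp hz with hz1 | hz1
    · have hcz : z - h < c ∧ c < z := ⟨hc.1, hc.2⟩
      have hcpos : (1:ℝ)/2 ≤ c := by linarith [hcz.1]
      rw [abs_of_nonneg (by linarith : (0:ℝ) ≤ c), abs_of_nonneg (by linarith : (0:ℝ) ≤ z)]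
      constructor <;> linarith [hcz.2]
    · have hcz : z - h < c ∧ c < z := ⟨hc.1, hc.2⟩
      have hcneg : c < 0 := by linarith [hcz.2]
      rw [abs_of_neg hcneg, abs_of_neg (by linarith : z < 0)]
      constructor <;> linarith [hcz.1, hcz.2]
  have hmono := sinh_div_cosh_sq_anti hc1.1 hc1.2
  have hπ : 0 < π := Real.pi_pos
  calc h * (π * (Real.sinh (π * (3 * |z| / 2)) / Real.cosh (π * (3 * |z| / 2)) ^ 2))
      ≤ h * (π * (Real.sinh (π * |c|) / Real.cosh (π * |c|) ^ 2)) := by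
        apply mul_le_mul_of_nonneg_left _ h0.le
        exact mul_le_mul_of_nonneg_left hmono hπ.le
    _ = _ := rfl

/-- Lower bound for the tail `L¹`-distance between the Lévy area density and its shift,
in terms of the integral of `|f₁'(3z/2)|` over `{|z| ≥ 1}`. -/
theorem levy_density_tail_shift_lower (h : ℝ) (h0 : 0 < h) (h12 : h ≤ 1 / 2) :
    h * ∫ z in {z : ℝ | 1 ≤ |z|},
        2 * π * |Real.exp (3 * π * z / 2) - Real.exp (-(3 * π * z / 2))| /
          (Real.exp (3 * π * z / 2) + Real.exp (-(3 * π * z / 2))) ^ 2 ≤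
      ∫ z in {z : ℝ | 1 ≤ |z|}, |levyDensity (z - h) - levyDensity z| := by
  have hmeas : MeasurableSet {z : ℝ | 1 ≤ |z|} :=
    measurableSet_le measurable_const measurable_id.abs
  rw [← MeasureTheory.integral_const_mul]
  apply integral_mono_of_nonneg
  · refine Filter.Eventually.of_forall fun z => ?_
    have : 0 ≤ 2 * π * |Real.exp (3 * π * z / 2) - Real.exp (-(3 * π * z / 2))| /
        (Real.exp (3 * π * z / 2) + Real.exp (-(3 * π * z / 2))) ^ 2 := by positivity
    positivity
  · exact ((levy_integrable.comp_sub_right h).sub levy_integrable).abs.integrableOn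
  · filter_upwards [ae_restrict_mem hmeas] with z hz using key_pointwise h h0 h12 hz
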